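/- If u, v ∈ C and C is a maximal k-clique in G(V, E ∪ {uv}), then there exist maximal k-cliques C_u, C_v in G(V,E) with u ∈ C_u, v ∈ C_v such that either |C| < k and C = (C_u ∩ C_v) ∪ {u,v}, or |C| = k and C ⊆ (C_u ∩ C_v) ∪ {u,v} with |(C_u ∩ C_v) ∪ {u,v}| ≤ k+1. -/
import Mathlib

def insEdge {V : Type*} (G : SimpleGraph V) (u v : V) : SimpleGraph V :=
  G ⊔ SimpleGraph.fromEdgeSet {s(u, v)}

def IsMaxClique {V : Type*} [DecidableEq V] (G : SimpleGraph V) (C : Finset V) : Prop :=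
  G.IsClique (C : Set V) ∧ ∀ D : Finset V, G.IsClique (D : Set V) → C ⊆ D → C = D

def IsMaxKClique {V : Type*} [DecidableEq V] (G : SimpleGraph V) (k : ℕ) (C : Finset V) : Prop :=
  (G.IsClique (C : Set V) ∧ C.card = k) ∨ (IsMaxClique G C ∧ C.card < k)

lemma insEdge_adj {V : Type*} (G : SimpleGraph V) (u v x y : V) :
    (insEdge G u v).Adj x y ↔ G.Adj x y ∨ ((x = u ∧ y = v ∨ x = v ∧ y = u) ∧ x ≠ y) := by
  simp [insEdge, Sym2.eq_iff]


lemma extend_clique {V : Type*} [Fintype V] [DecidableEq V] (G : SimpleGraph V) (k : ℕ)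
    (S : Finset V) (hS : G.IsClique (S : Set V)) (hk : S.card ≤ k) :
    ∃ T, IsMaxKClique G k T ∧ S ⊆ T := by
  classical
  set 𝒮 : Finset (Finset V) :=
    Finset.univ.filter (fun T => S ⊆ T ∧ G.IsClique (T : Set V) ∧ T.card ≤ k) with h𝒮
  have hSmem : S ∈ 𝒮 := by simp [h𝒮, hS, hk]
  obtain ⟨T, hT, hTmax⟩ := 𝒮.exists_max_image Finset.card ⟨S, hSmem⟩
  simp only [h𝒮, Finset.mem_filter, Finset.mem_univ, true_and] at hT
  obtain ⟨hST, hTclq, hTk⟩ := hT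
  rcases eq_or_lt_of_le hTk with heq | hlt
  · exact ⟨T, Or.inl ⟨hTclq, heq⟩, hST⟩
  · refine ⟨T, Or.inr ⟨⟨hTclq, ?_⟩, hlt⟩, hST⟩
    intro D hDclq hTD
    by_contra hne
    obtain ⟨w, hwD, hwT⟩ := Finset.exists_of_ssubset (lt_of_le_of_ne hTD hne)
    have hins : insert w T ∈ Finset.univ.filter
        (fun T => S ⊆ T ∧ G.IsClique (T : Set V) ∧ T.card ≤ k) := by
      simp only [Finset.mem_filter, Finset.mem_univ, true_and]
      refine ⟨hST.trans (Finset.subset_insert _ _), ?_, ?_⟩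
      · apply hDclq.subset
        rw [Finset.coe_insert]
        exact Set.insert_subset hwD (by exact_mod_cast hTD)
      · rw [Finset.card_insert_of_notMem hwT]
        omega
    have := hTmax _ hins
    rw [Finset.card_insert_of_notMem hwT] at this
    omega

/-- If `u, v ∈ C` and `C` is a maximal `k`-clique in `G(V, E ∪ {uv})`, then there exist maximal
`k`-cliques `C_u, C_v` in `G(V,E)` with `u ∈ C_u`, `v ∈ C_v` such that either `|C| < k` and
`C = (C_u ∩ C_v) ∪ {u,v}`, or `|C| = k` and `C ⊆ (C_u ∩ C_v) ∪ {u,v}` with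
`|(C_u ∩ C_v) ∪ {u,v}| ≤ k+1`. -/
theorem stmt_9 {V : Type*} [Fintype V] [DecidableEq V] (G : SimpleGraph V) (u v : V)
    (huv : u ≠ v) (k : ℕ) (C : Finset V) (hu : u ∈ C) (hv : v ∈ C)
    (hC : IsMaxKClique (insEdge G u v) k C) :
    ∃ Cu Cv : Finset V, IsMaxKClique G k Cu ∧ IsMaxKClique G k Cv ∧ u ∈ Cu ∧ v ∈ Cv ∧
      ((C.card < k ∧ C = (Cu ∩ Cv) ∪ {u, v}) ∨
       (C.card = k ∧ C ⊆ (Cu ∩ Cv) ∪ {u, v} ∧ ((Cu ∩ Cv) ∪ {u, v}).card ≤ k + 1)) := by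
  classical
  have hCclq : (insEdge G u v).IsClique (C : Set V) := by
    rcases hC with ⟨h, _⟩ | ⟨⟨h, _⟩, _⟩ <;> exact h
  have hCk : C.card ≤ k := by
    rcases hC with ⟨_, h⟩ | ⟨_, h⟩ <;> omega
  -- erase v is a G-clique
  have hEV : G.IsClique ((C.erase v : Finset V) : Set V) := by
    intro x hx y hy hxy
    have hx' := Finset.mem_coe.1 hx
    have hy' := Finset.mem_coe.1 hy
    have := hCclq (Finset.mem_coe.2 (Finset.mem_of_mem_erase hx'))
      (Finset.mem_coe.2 (Finset.mem_of_mem_erase hy')) hxy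
    rw [insEdge_adj] at this
    rcases this with h | ⟨⟨⟨_, rfl⟩ | ⟨rfl, _⟩, _⟩⟩
    · exact h
    · exact absurd rfl (Finset.ne_of_mem_erase hy')
    · exact absurd rfl (Finset.ne_of_mem_erase hx')
  have hEU : G.IsClique ((C.erase u : Finset V) : Set V) := by
    intro x hx y hy hxy
    have hx' := Finset.mem_coe.1 hx
    have hy' := Finset.mem_coe.1 hy
    have := hCclq (Finset.mem_coe.2 (Finset.mem_of_mem_erase hx'))
      (Finset.mem_coe.2 (Finset.mem_of_mem_erase hy')) hxy
    rw [insEdge_adj] at this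
    rcases this with h | ⟨⟨⟨rfl, _⟩ | ⟨_, rfl⟩, _⟩⟩
    · exact h
    · exact absurd rfl (Finset.ne_of_mem_erase hx')
    · exact absurd rfl (Finset.ne_of_mem_erase hy')
  obtain ⟨Cu, hCu, hsubu⟩ := extend_clique G k (C.erase v) hEV
    (le_trans (Finset.card_le_card (Finset.erase_subset _ _)) hCk)
  obtain ⟨Cv, hCv, hsubv⟩ := extend_clique G k (C.erase u) hEU
    (le_trans (Finset.card_le_card (Finset.erase_subset _ _)) hCk)
  have huCu : u ∈ Cu := hsubu (Finset.mem_erase.2 ⟨huv, hu⟩)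
  have hvCv : v ∈ Cv := hsubv (Finset.mem_erase.2 ⟨huv.symm, hv⟩)
  have hCuclq : G.IsClique (Cu : Set V) := by
    rcases hCu with ⟨h, _⟩ | ⟨⟨h, _⟩, _⟩ <;> exact h
  have hCvclq : G.IsClique (Cv : Set V) := by
    rcases hCv with ⟨h, _⟩ | ⟨⟨h, _⟩, _⟩ <;> exact h
  have hCuk : Cu.card ≤ k := by
    rcases hCu with ⟨_, h⟩ | ⟨_, h⟩ <;> omega
  have hCsub : C ⊆ (Cu ∩ Cv) ∪ {u, v} := by
    intro x hx
    rcases eq_or_ne x u with rfl | hxu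
    · simp
    rcases eq_or_ne x v with rfl | hxv
    · simp
    refine Finset.mem_union_left _ (Finset.mem_inter.2 ⟨?_, ?_⟩)
    · exact hsubu (Finset.mem_erase.2 ⟨hxv, hx⟩)
    · exact hsubv (Finset.mem_erase.2 ⟨hxu, hx⟩)
  refine ⟨Cu, Cv, hCu, hCv, huCu, hvCv, ?_⟩
  rcases hC with ⟨_, hcard⟩ | ⟨⟨_, hmax⟩, hlt⟩
  · -- card = k
    refine Or.inr ⟨hcard, hCsub, ?_⟩
    have : (Cu ∩ Cv) ∪ {u, v} ⊆ insert v Cu := by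
      intro x hx
      rcases Finset.mem_union.1 hx with h | h
      · exact Finset.mem_insert_of_mem (Finset.mem_inter.1 h).1
      · rcases Finset.mem_insert.1 h with rfl | h
        · exact Finset.mem_insert_of_mem huCu
        · simp only [Finset.mem_singleton] at h
          subst h; exact Finset.mem_insert_self _ _
    calc ((Cu ∩ Cv) ∪ {u, v}).card ≤ (insert v Cu).card := Finset.card_le_card this
      _ ≤ Cu.card + 1 := Finset.card_insert_le _ _
      _ ≤ k + 1 := by omega
  · -- card < k, maximal
    refine Or.inl ⟨hlt, ?_⟩
    apply Finset.Subset.antisymm hCsub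
    intro x hx
    rcases Finset.mem_union.1 hx with h | h
    · -- x ∈ Cu ∩ Cv : show x ∈ C
      obtain ⟨hxu, hxv⟩ := Finset.mem_inter.1 h
      by_contra hxC
      have hclq' : (insEdge G u v).IsClique ((insert x C : Finset V) : Set V) := by
        rw [Finset.coe_insert]
        refine hCclq.insert ?_
        intro b hb hbx
        have hbC := Finset.mem_coe.1 hb
        rw [insEdge_adj]
        left
        rcases eq_or_ne b v with rfl | hbv
        · exact hCvclq hxv (Finset.mem_coe.2 hvCv) (fun h => hxC (h ▸ hbC))
        · have : b ∈ Cu := hsubu (Finset.mem_erase.2 ⟨hbv, hbC⟩)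
          exact hCuclq hxu (Finset.mem_coe.2 this) (fun h => hxC (h ▸ hbC))
      have := hmax (insert x C) hclq' (Finset.subset_insert _ _)
      exact hxC (this ▸ Finset.mem_insert_self x C)
    · rcases Finset.mem_insert.1 h with rfl | h
      · exact hu
      · simp only [Finset.mem_singleton] at h; subst h; exact hv
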